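/- For every n-ary quasigroup f of order 4, the order of the autotopy group satisfies |Atp(f)| ≤ 6·4ⁿ, with equality if and only if f is linear (i.e., isotopic to lₙ(x₁,…,xₙ) = x₁ ⊕ ⋯ ⊕ xₙ where ⊕ is the operation of Z₂ × Z₂ on Σ = {0,1,2,3}). -/

import Mathlib

def IsNQuasigroup {α : Type} {n : ℕ} (f : (Fin n → α) → α) : Prop :=
  ∀ (i : Fin n) (x : Fin n → α), Function.Bijective (fun a => f (Function.update x i a))

def IsAutotopy {α : Type} {n : ℕ} (f : (Fin n → α) → α)
    (θ : Fin (n + 1) → Equiv.Perm α) : Prop :=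
  ∀ x : Fin n → α, f (fun i => θ i.succ (x i)) = θ 0 (f x)

/-- `⊕` on `Σ = {0,1,2,3}`: bitwise XOR (the group operation of `Z₂ × Z₂`). -/
def xor4 (x y : Fin 4) : Fin 4 :=
  ⟨x.val ^^^ y.val, Nat.xor_lt_two_pow (n := 2) x.isLt y.isLt⟩

/-- `lₙ(x₁,…,xₙ) = x₁ ⊕ ⋯ ⊕ xₙ`. -/
def linQ {n : ℕ} (x : Fin n → Fin 4) : Fin 4 := (List.ofFn x).foldr xor4 0

/-- `f` is linear: isotopic to `lₙ`. -/
def IsLinear {n : ℕ} (f : (Fin n → Fin 4) → Fin 4) : Prop :=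
  ∃ θ : Fin (n + 1) → Equiv.Perm (Fin 4),
    ∀ x, f x = (θ 0)⁻¹ (linQ (fun i => θ i.succ (x i)))


/-! An autotopy `θ` of a quasigroup `f` is determined by `θ₀` and the images `θᵢ cᵢ` of any base
point `c`, so `θ ↦ ((θᵢ cᵢ)ᵢ, θ₀)` embeds `Atp(f)` into the pairs `(v, σ)` with `σ (f c) = f v`,
of which there are `4ⁿ · 3!`. For `lₙ` every pair is attained, by an automorphism of `(Z₂)²`
followed by translations, and the number of autotopies is an isotopy invariant.

Conversely, normalize `f` by an isotopy so that `f 0 = 0` and `f` is the identity on each axis.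
If every pair is attained, the pairs `(0, σ)` with `σ 0 = 0` give the diagonal autotopies
`(σ, …, σ)`, which force `f` to be `⊕` on each coordinate plane; the pairs `(a eᵢ, x ↦ a ⊕ x)`
then give translations in the `i`-th coordinate, so `f (x[i ↦ a]) = a ⊕ xᵢ ⊕ f x`, and `f = lₙ`.
-/

open Function Equiv
open scoped Nat

section General

variable {α : Type} {n : ℕ} {f : (Fin n → α) → α} {θ ψ : Fin (n + 1) → Perm α}

theorem IsAutotopy.apply_update (hθ : IsAutotopy f θ) (x : Fin n → α) (i : Fin n) (b : α) :
    f (update (fun k => θ k.succ (x k)) i (θ i.succ b)) = θ 0 (f (update x i b)) := by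
  rw [← hθ]
  congr 1
  funext k
  exact (Function.apply_update (fun k => θ k.succ) x i b k).symm

theorem IsAutotopy.ext_of_base (hf : IsNQuasigroup f) (c : Fin n → α) (hθ : IsAutotopy f θ)
    (hψ : IsAutotopy f ψ) (h0 : θ 0 = ψ 0) (hc : ∀ i, θ i.succ (c i) = ψ i.succ (c i)) :
    θ = ψ := by
  have hc' : (fun k => θ k.succ (c k)) = fun k => ψ k.succ (c k) := funext hc
  funext i
  refine Fin.cases h0 (fun j => Equiv.ext fun b => (hf j fun k => θ k.succ (c k)).injective ?_) i
  rw [hθ.apply_update, hc', hψ.apply_update, h0]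

def autotopyData (f : (Fin n → α) → α) (c : Fin n → α) (θ : {θ // IsAutotopy f θ}) :
    {p : (Fin n → α) × Perm α // p.2 (f c) = f p.1} :=
  ⟨(fun i => θ.1 i.succ (c i), θ.1 0), (θ.2 c).symm⟩

theorem autotopyData_injective (hf : IsNQuasigroup f) (c : Fin n → α) :
    Injective (autotopyData f c) := by
  rintro ⟨θ, hθ⟩ ⟨ψ, hψ⟩ h
  simp only [autotopyData, Subtype.mk.injEq, Prod.mk.injEq, funext_iff] at h
  exact Subtype.ext (hθ.ext_of_base hf c hψ h.2 h.1)

section Card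

variable [Fintype α]

theorem card_perm_apply_eq (a b : α) :
    Nat.card {σ : Perm α // σ a = b} = (Fintype.card α - 1)! := by
  classical
  have e₁ : {σ : Perm α // σ a = b} ≃ {σ : Perm α // σ a = a} :=
    (Equiv.mulLeft (swap a b)).subtypeEquiv fun σ => by
      simp [Perm.mul_apply, swap_apply_eq_iff]
  have e₂ : {σ : Perm α // σ a = a} ≃ Perm {x // x ≠ a} :=
    ((Perm.subtypeEquivSubtypePerm (· ≠ a)).trans
      (Equiv.subtypeEquivRight fun σ => by simp)).symm
  rw [Nat.card_congr (e₁.trans e₂), Nat.card_perm, Nat.card_eq_fintype_card,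
    Fintype.card_subtype_compl, Fintype.card_subtype_eq]

theorem card_prod_perm_apply_eq {β : Type} [Fintype β] (g : β → α) (a : α) :
    Nat.card {p : β × Perm α // p.2 a = g p.1} = Fintype.card β * (Fintype.card α - 1)! := by
  rw [Nat.card_congr (Equiv.subtypeProdEquivSigmaSubtype fun b (σ : Perm α) => σ a = g b),
    Nat.card_sigma]
  simp only [card_perm_apply_eq, Finset.sum_const, Finset.card_univ, smul_eq_mul]

theorem card_autotopy_le [Nonempty α] (hf : IsNQuasigroup f) :
    Nat.card {θ // IsAutotopy f θ} ≤ Fintype.card α ^ n * (Fintype.card α - 1)! := by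
  have hinj := autotopyData_injective hf fun _ => Classical.arbitrary α
  simpa only [card_prod_perm_apply_eq, Fintype.card_fun, Fintype.card_fin] using
    Nat.card_le_card_of_injective _ hinj

theorem autotopyData_surjective_of_card_eq (hf : IsNQuasigroup f) (c : Fin n → α)
    (h : Nat.card {θ // IsAutotopy f θ} = Fintype.card α ^ n * (Fintype.card α - 1)!) :
    Surjective (autotopyData f c) :=
  ((Nat.bijective_iff_injective_and_card _).2
    ⟨autotopyData_injective hf c, by
      rw [h, card_prod_perm_apply_eq, Fintype.card_fun, Fintype.card_fin]⟩).2

theorem le_card_autotopy_of_surjective (c : Fin n → α) (h : Surjective (autotopyData f c)) :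
    Fintype.card α ^ n * (Fintype.card α - 1)! ≤ Nat.card {θ // IsAutotopy f θ} := by
  simpa only [card_prod_perm_apply_eq, Fintype.card_fun, Fintype.card_fin] using
    Nat.card_le_card_of_surjective _ h

end Card

end General

section Isotopy

variable {α : Type} {n : ℕ} {f : (Fin n → α) → α} {θ : Fin (n + 1) → Perm α}

def isotope (f : (Fin n → α) → α) (η : Fin (n + 1) → Perm α) : (Fin n → α) → α :=
  fun x => (η 0)⁻¹ (f fun i => η i.succ (x i))

theorem isotope_isotope_inv (f : (Fin n → α) → α) (η : Fin (n + 1) → Perm α) :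
    isotope (isotope f η) η⁻¹ = f := by
  funext x
  simp [isotope]

theorem isNQuasigroup_isotope (hf : IsNQuasigroup f) (η : Fin (n + 1) → Perm α) :
    IsNQuasigroup (isotope f η) := by
  intro i x
  have h : (fun a => isotope f η (update x i a)) =
      ⇑(η 0)⁻¹ ∘ (fun b => f (update (fun k => η k.succ (x k)) i b)) ∘ η i.succ := by
    funext a
    simp only [isotope, comp_apply]
    congr 2
    funext k
    exact Function.apply_update (fun k => ⇑(η k.succ)) x i a k
  rw [h]
  exact (Equiv.bijective _).comp ((hf i _).comp (Equiv.bijective _))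

theorem isAutotopy_isotope (hθ : IsAutotopy f θ) (η : Fin (n + 1) → Perm α) :
    IsAutotopy (isotope f η) (η⁻¹ * θ * η) := by
  intro x
  simp [isotope, hθ (fun i => η i.succ (x i))]

theorem card_autotopy_isotope (f : (Fin n → α) → α) (η : Fin (n + 1) → Perm α) :
    Nat.card {θ // IsAutotopy (isotope f η) θ} = Nat.card {θ // IsAutotopy f θ} := by
  refine Nat.card_congr <| ((Equiv.mulLeft η).trans (Equiv.mulRight η⁻¹)).subtypeEquiv
    fun θ => ⟨fun h => ?_, fun h => ?_⟩
  · simpa [isotope_isotope_inv, mul_assoc] using isAutotopy_isotope h η⁻¹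
  · simpa [mul_assoc] using isAutotopy_isotope h η

end Isotopy

def IsNormalized {α : Type} [Zero α] {n : ℕ} (f : (Fin n → α) → α) : Prop :=
  f 0 = 0 ∧ ∀ i a, f (Pi.single i a) = a

section Normalized

variable {α : Type} [Zero α] {n : ℕ} {f : (Fin n → α) → α} {θ : Fin (n + 1) → Perm α}

theorem exists_isNormalized_isotope (hf : IsNQuasigroup f) :
    ∃ η, IsNormalized (isotope f η) := by
  classical
  set τ := swap (f 0) 0
  let ρ : Fin n → Perm α := fun j =>
    Equiv.ofBijective (fun b => τ (f (Pi.single j b))) (τ.bijective.comp (hf j 0))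
  have hρ : ∀ j, (ρ j)⁻¹ 0 = 0 := fun j => by
    rw [Perm.inv_eq_iff_eq]
    simp [ρ, τ]
  refine ⟨Fin.cons τ⁻¹ fun j => (ρ j)⁻¹, ?_, fun i a => ?_⟩
  · simp [isotope, hρ, τ, ← Pi.zero_def]
  · simp only [isotope, Fin.cons_zero, Fin.cons_succ, inv_inv]
    rw [← Pi.single_op (fun k : Fin n => ⇑(ρ k)⁻¹) hρ]
    exact (ρ i).apply_symm_apply a

theorem IsAutotopy.eq_const_of_isNormalized (hθ : IsAutotopy f θ) (hf : IsNormalized f)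
    (h : ∀ i : Fin n, θ i.succ 0 = 0) : θ = fun _ => θ 0 := by
  funext i
  refine Fin.cases rfl (fun i => Equiv.ext fun b => ?_) i
  have := hθ (Pi.single i b)
  rwa [← Pi.single_op (fun k : Fin n => ⇑(θ k.succ)) h, hf.2, hf.2] at this

theorem isAutotopy_const_of_surjective
    (hf : IsNormalized f) (hs : Surjective (autotopyData f 0)) (σ : Perm α) (hσ : σ 0 = 0) :
    IsAutotopy f fun _ => σ := by
  obtain ⟨⟨θ, hθ⟩, h⟩ := hs ⟨(0, σ), by simp [hf.1, hσ]⟩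
  simp only [autotopyData, Subtype.mk.injEq, Prod.mk.injEq, funext_iff] at h
  rw [hθ.eq_const_of_isNormalized hf h.1, h.2] at hθ
  exact hθ

end Normalized

theorem xor4_zero : ∀ a : Fin 4, xor4 a 0 = a := by decide
theorem zero_xor4 : ∀ a : Fin 4, xor4 0 a = a := by decide
theorem xor4_self : ∀ a : Fin 4, xor4 a a = 0 := by decide
theorem xor4_xor4_cancel_left : ∀ a b : Fin 4, xor4 a (xor4 a b) = b := by decide
theorem xor4_xor4_cancel_right : ∀ a b : Fin 4, xor4 (xor4 a b) b = a := by decide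
theorem xor4_assoc : ∀ a b c : Fin 4, xor4 (xor4 a b) c = xor4 a (xor4 b c) := by decide
theorem xor4_left_comm : ∀ a b c : Fin 4, xor4 a (xor4 b c) = xor4 b (xor4 a c) := by decide
theorem xor4_xor4_xor4_comm :
    ∀ a b c d : Fin 4, xor4 (xor4 a b) (xor4 c d) = xor4 (xor4 a c) (xor4 b d) := by decide

theorem eq_xor4_of_ne : ∀ a b d : Fin 4, a ≠ 0 → b ≠ 0 → a ≠ b → d ≠ 0 → d ≠ a → d ≠ b →
    d = xor4 a b := by decide

theorem Equiv.Perm.map_xor4 : ∀ σ : Perm (Fin 4), σ 0 = 0 →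
    ∀ a b, σ (xor4 a b) = xor4 (σ a) (σ b) := by decide

theorem exists_perm_fixedPoints_eq : ∀ a : Fin 4, a ≠ 0 →
    ∃ σ : Perm (Fin 4), σ 0 = 0 ∧ σ a = a ∧ ∀ d, σ d = d → d = 0 ∨ d = a := by decide

def xorPerm (a : Fin 4) : Perm (Fin 4) :=
  Involutive.toPerm (xor4 a) (xor4_xor4_cancel_left a)

@[simp] theorem xorPerm_apply (a b : Fin 4) : xorPerm a b = xor4 a b := rfl

section LinQ

variable {n : ℕ}

theorem linQ_succ (x : Fin (n + 1) → Fin 4) : linQ x = xor4 (x 0) (linQ (Fin.tail x)) := by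
  rw [linQ, List.ofFn_succ]
  rfl

theorem linQ_zero : linQ (0 : Fin n → Fin 4) = 0 := by
  induction n with
  | zero => rfl
  | succ n ih => rw [linQ_succ]; exact (zero_xor4 _).trans ih

theorem linQ_xor4 (x y : Fin n → Fin 4) :
    linQ (fun i => xor4 (x i) (y i)) = xor4 (linQ x) (linQ y) := by
  induction n with
  | zero => exact (xor4_self 0).symm
  | succ n ih =>
    rw [linQ_succ, linQ_succ x, linQ_succ y, ← xor4_xor4_xor4_comm]
    exact congrArg _ (ih (Fin.tail x) (Fin.tail y))

theorem linQ_perm (σ : Perm (Fin 4)) (hσ : σ 0 = 0) (x : Fin n → Fin 4) :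
    linQ (fun i => σ (x i)) = σ (linQ x) := by
  induction n with
  | zero => exact hσ.symm
  | succ n ih =>
    rw [linQ_succ, linQ_succ x, σ.map_xor4 hσ]
    exact congrArg _ (ih (Fin.tail x))

theorem linQ_update (x : Fin n → Fin 4) (i : Fin n) (a : Fin 4) :
    linQ (update x i a) = xor4 a (xor4 (x i) (linQ x)) := by
  induction n with
  | zero => exact i.elim0
  | succ n ih =>
    rw [linQ_succ, linQ_succ x]
    cases i using Fin.cases with
    | zero => rw [Fin.tail_update_zero, update_self, xor4_xor4_cancel_left]
    | succ j =>
      rw [Fin.tail_update_succ, ih, update_of_ne (Fin.succ_ne_zero j).symm,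
        xor4_left_comm (x 0), xor4_left_comm (x 0)]
      rfl

theorem autotopyData_linQ_surjective : Surjective (autotopyData (linQ (n := n)) 0) := by
  rintro ⟨⟨v, σ⟩, hvσ⟩
  rw [linQ_zero] at hvσ
  set ρ := σ.trans (xorPerm (σ 0))
  have hρ : ρ 0 = 0 := xor4_self _
  refine ⟨⟨Fin.cons σ fun j => ρ.trans (xorPerm (v j)), fun x => ?_⟩, ?_⟩
  · simp only [Fin.cons_succ, Fin.cons_zero, trans_apply, xorPerm_apply]
    rw [linQ_xor4, linQ_perm ρ hρ, ← hvσ]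
    exact xor4_xor4_cancel_left _ _
  · simp [autotopyData, hρ, xor4_zero]

end LinQ

theorem eq_xor4_of_perm_equivariant (h : Fin 4 → Fin 4 → Fin 4) (h_zero_right : ∀ a, h a 0 = a)
    (h_zero_left : ∀ b, h 0 b = b) (h_inj_right : ∀ a, Injective (h a))
    (h_inj_left : ∀ b, Injective (h · b))
    (h_perm : ∀ σ : Perm (Fin 4), σ 0 = 0 → ∀ a b, h (σ a) (σ b) = σ (h a b)) (a b : Fin 4) :
    h a b = xor4 a b := by
  have h_self : ∀ a, h a a = 0 := by
    intro a
    by_cases ha : a = 0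
    · rw [ha, h_zero_left]
    -- `h a a` is fixed by the transposition of the two points outside `{0, a}`.
    obtain ⟨σ, hσ0, hσa, hfix⟩ := exists_perm_fixedPoints_eq a ha
    have := h_perm σ hσ0 a a
    rw [hσa] at this
    refine (hfix _ this.symm).resolve_right fun haa => ha ?_
    exact h_inj_right a (haa.trans (h_zero_right a).symm)
  by_cases ha : a = 0
  · rw [ha, h_zero_left, zero_xor4]
  by_cases hb : b = 0
  · rw [hb, h_zero_right, xor4_zero]
  by_cases hab : a = b
  · rw [hab, h_self, xor4_self]
  -- `h a b` differs from `h a 0 = a`, `h a a = 0` and `h 0 b = b`.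
  refine eq_xor4_of_ne a b _ ha hb hab (fun h0 => hab ?_) (fun ha' => hb ?_) (fun hb' => ha ?_)
  · exact h_inj_right a (h0.trans (h_self a).symm) |>.symm
  · exact h_inj_right a (ha'.trans (h_zero_right a).symm)
  · exact h_inj_left b (hb'.trans (h_zero_left b).symm)

theorem Pi.induction_on_update {ι β : Type*} [Fintype ι] [DecidableEq ι] {P : (ι → β) → Prop}
    (c : ι → β) (hc : P c) (h : ∀ x i b, P x → P (update x i b)) (x : ι → β) : P x := by
  have key : ∀ s : Finset ι, P (s.piecewise x c) := by
    intro s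
    induction s using Finset.induction_on with
    | empty => simpa using hc
    | insert i s _ ih => rw [Finset.piecewise_insert]; exact h _ i _ ih
  simpa using key Finset.univ

section FullAutotopyGroup

variable {n : ℕ} {g : (Fin n → Fin 4) → Fin 4}

theorem apply_update_single_of_surjective (hg : IsNQuasigroup g) (hn : IsNormalized g)
    (hs : Surjective (autotopyData g 0)) {i j : Fin n} (hij : i ≠ j) (a b : Fin 4) :
    g (update (Pi.single i a) j b) = xor4 a b := by
  refine eq_xor4_of_perm_equivariant (fun a b => g (update (Pi.single i a) j b))
    (fun a => ?_) (fun b => ?_) (fun a => (hg j _).injective) (fun b => ?_)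
    (fun σ hσ a b => ?_) a b
  · have h : (Pi.single i a : Fin n → Fin 4) j = 0 := Pi.single_eq_of_ne hij.symm _
    rw [update_eq_self_iff.2 h.symm]
    exact hn.2 i a
  · rw [Pi.single_zero]
    exact hn.2 j b
  · have h : (fun a => g (update (Pi.single i a) j b)) = fun a => g (update (Pi.single j b) i a) :=
      funext fun a => congrArg g (update_comm hij _ _ _)
    simpa only [h] using (hg i (Pi.single j b)).injective
  · rw [← isAutotopy_const_of_surjective hn hs σ hσ]
    congr 1
    funext k
    rw [Function.apply_update (fun _ => σ), ← Pi.single_op (fun _ => σ) (fun _ => hσ)]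

theorem isAutotopy_translation_of_surjective (hg : IsNQuasigroup g) (hn : IsNormalized g)
    (hs : Surjective (autotopyData g 0)) (i : Fin n) (c : Fin 4) :
    IsAutotopy g (Fin.cons (xorPerm c) (update 1 i (xorPerm c))) := by
  obtain ⟨⟨θ, hθ⟩, h⟩ := hs ⟨(Pi.single i c, xorPerm c), by simp [hn.1, hn.2, xor4_zero]⟩
  simp only [autotopyData, Subtype.mk.injEq, Prod.mk.injEq] at h
  obtain ⟨hbase, h0⟩ := h
  suffices θ = Fin.cons (xorPerm c) (update 1 i (xorPerm c)) from this ▸ hθ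
  refine funext (Fin.cases h0 fun k => Equiv.ext fun b => ?_)
  have hb : g (update 0 k b) = b := hn.2 k b
  have key := hθ.apply_update 0 k b
  rw [hbase, h0, xorPerm_apply, hb] at key
  rw [Fin.cons_succ]
  by_cases hk : k = i
  · subst hk
    have h : update (Pi.single k c : Fin n → Fin 4) k (θ k.succ b) =
        (Pi.single k (θ k.succ b) : Fin n → Fin 4) := update_idem _ _ _
    rw [h, hn.2] at key
    rwa [update_self]
  · rw [apply_update_single_of_surjective hg hn hs (Ne.symm hk)] at key
    rw [update_of_ne hk, Pi.one_apply, Perm.one_apply]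
    simpa only [xor4_xor4_cancel_left] using congrArg (xor4 c) key

theorem apply_update_of_surjective (hg : IsNQuasigroup g) (hn : IsNormalized g)
    (hs : Surjective (autotopyData g 0)) (x : Fin n → Fin 4) (i : Fin n) (a : Fin 4) :
    g (update x i a) = xor4 a (xor4 (x i) (g x)) := by
  have h := isAutotopy_translation_of_surjective hg hn hs i (xor4 a (x i)) x
  simp only [Fin.cons_succ, Fin.cons_zero, xorPerm_apply] at h
  rw [← xor4_assoc, ← h]
  congr 1
  funext k
  by_cases hk : k = i
  · subst hk
    simp [xor4_xor4_cancel_right]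
  · simp [update_of_ne hk]

theorem eq_linQ_of_surjective (hg : IsNQuasigroup g) (hn : IsNormalized g)
    (hs : Surjective (autotopyData g 0)) : g = linQ := by
  funext x
  refine Pi.induction_on_update (P := fun x => g x = linQ x) 0 (by rw [hn.1, linQ_zero])
    (fun x i a hx => ?_) x
  rw [apply_update_of_surjective hg hn hs, linQ_update, hx]

end FullAutotopyGroup

/-- For every `n`-ary quasigroup `f` of order 4, `|Atp(f)| ≤ 6·4ⁿ`, with equality
if and only if `f` is linear. -/
theorem autotopy_upper_bound (n : ℕ) (f : (Fin n → Fin 4) → Fin 4)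
    (hf : IsNQuasigroup f) :
    Nat.card {θ : Fin (n + 1) → Equiv.Perm (Fin 4) // IsAutotopy f θ} ≤ 6 * 4 ^ n ∧
    (Nat.card {θ : Fin (n + 1) → Equiv.Perm (Fin 4) // IsAutotopy f θ} = 6 * 4 ^ n ↔
      IsLinear f) := by
  have hmax : Fintype.card (Fin 4) ^ n * (Fintype.card (Fin 4) - 1)! = 6 * 4 ^ n := by
    simp [Nat.factorial, mul_comm]
  refine ⟨hmax ▸ card_autotopy_le hf, fun hcard => ?_, fun hlin => ?_⟩
  · obtain ⟨η, hn⟩ := exists_isNormalized_isotope hf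
    have hg := isNQuasigroup_isotope hf η
    have hs := autotopyData_surjective_of_card_eq hg 0 (by rw [card_autotopy_isotope, hcard, hmax])
    refine ⟨η⁻¹, fun x => ?_⟩
    rw [← eq_linQ_of_surjective hg hn hs]
    exact congrFun (isotope_isotope_inv f η).symm x
  · obtain ⟨η, hη⟩ := hlin
    obtain rfl : f = isotope linQ η := funext hη
    refine le_antisymm (hmax ▸ card_autotopy_le hf) ?_
    rw [card_autotopy_isotope, ← hmax]
    exact le_card_autotopy_of_surjective 0 autotopyData_linQ_surjective
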